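/- Let GF(q) be a finite field of order q = ef + 1 = ερ + 1, where q is a prime power, e, f, ε, ρ > 1, ε | e and e > ε. Suppose C₀^ε is a proper (q, ef/ε, λ, μ)-partial difference set, and let C₀^ε′ = {C₀^e, C_ε^e, …, C_{e−ε}^e}. Then: (i) if φ_i ≠ φ_j for some distinct i, j ∈ {1, …, ε−1}, then C₀^ε′ is neither a disjoint partial difference family nor an external partial difference family. Otherwise, let κ = φ₁ − φ₀. (ii) If κ = 0, then C₀^ε′ is a (q, e/ε, f, (f−1)/ε)-disjoint difference family and a (q, e/ε, f, λ − (f−1)/ε, μ − (f−1)/ε)-external partial difference family. (iii) If κ = μ − λ, then C₀^ε′ is a (q, e/ε, f, (e−ε)f/ε²)-external difference family and a (q, e/ε, f, λ − (e−ε)f/ε², μ − (e−ε)f/ε²)-disjoint partial difference family. (iv) If κ ∉ {0, μ−λ}, then C₀^ε′ is a proper (q, e/ε, f, φ₀, φ₀+κ)-disjoint partial difference family and a proper (q, e/ε, f, λ − φ₀, μ − φ₀ − κ)-external partial difference family. -/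

import Mathlib

open Finset

section Defs

variable {G : Type*} [AddGroup G] [DecidableEq G]

/-- The multiset of internal differences `x - y` (`x ≠ y`) of a finset. -/
def intDiff (D : Finset G) : Multiset G :=
  ((D ×ˢ D).filter fun p => p.1 ≠ p.2).val.map fun p => p.1 - p.2

/-- The multiset of external differences `x - y`, `x ∈ D₁`, `y ∈ D₂`. -/
def extDiff (D₁ D₂ : Finset G) : Multiset G :=
  (D₁ ×ˢ D₂).val.map fun p => p.1 - p.2

variable {ι : Type*} [Fintype ι] [DecidableEq ι]

/-- The multiset of all internal differences of a family of sets. -/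
def famInt (D : ι → Finset G) : Multiset G := ∑ i, intDiff (D i)

/-- The multiset of all external differences between distinct members of a family of sets. -/
def famExt (D : ι → Finset G) : Multiset G :=
  ∑ i, ∑ j, if j = i then 0 else extDiff (D i) (D j)

/-- The union of the members of a family of sets. -/
def famU (D : ι → Finset G) : Finset G := Finset.univ.biUnion D

variable [Fintype G]

/-- `D` is an `(n,k,λ)`-difference set: `Δ(D) = λ(G*)`. -/
def IsDS (n k : ℕ) (lam : ℤ) (D : Finset G) : Prop :=
  Fintype.card G = n ∧ D.card = k ∧
    ∀ x : G, ((intDiff D).count x : ℤ) = if x = 0 then 0 else lam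

/-- `P` is an `(n,k,λ,μ)`-partial difference set: `Δ(P) = λ(P) + μ(G* \ P)`. -/
def IsPDS (n k : ℕ) (lam mu : ℤ) (P : Finset G) : Prop :=
  Fintype.card G = n ∧ P.card = k ∧
    ∀ x : G, ((intDiff P).count x : ℤ) =
      if x ∈ P then lam else if x = 0 then 0 else mu

/-- `D` is a family of `m` pairwise disjoint `k`-subsets of a group of order `n`. -/
def FamShape (n m k : ℕ) (D : ι → Finset G) : Prop :=
  Fintype.card G = n ∧ Fintype.card ι = m ∧ (∀ i, (D i).card = k) ∧
    ∀ i j, i ≠ j → Disjoint (D i) (D j)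

/-- `(n,m,k,λ)`-disjoint difference family: `⋃ᵢ Δ(Dᵢ) = λ(G*)`. -/
def IsDDF (n m k : ℕ) (lam : ℤ) (D : ι → Finset G) : Prop :=
  FamShape n m k D ∧
    ∀ x : G, ((famInt D).count x : ℤ) = if x = 0 then 0 else lam

/-- `(n,m,k,λ)`-external difference family: `⋃_{i≠j} Δ(Dᵢ,Dⱼ) = λ(G*)`. -/
def IsEDF (n m k : ℕ) (lam : ℤ) (D : ι → Finset G) : Prop :=
  FamShape n m k D ∧
    ∀ x : G, ((famExt D).count x : ℤ) = if x = 0 then 0 else lam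

/-- `(n,m,k,λ,μ)`-disjoint partial difference family:
sets in `G*`, `⋃ᵢ Δ(Dᵢ) = λ(S) + μ(G* \ S)` where `S = ⋃ᵢ Dᵢ`. -/
def IsDPDF (n m k : ℕ) (lam mu : ℤ) (D : ι → Finset G) : Prop :=
  FamShape n m k D ∧ (∀ i, (0 : G) ∉ D i) ∧
    ∀ x : G, ((famInt D).count x : ℤ) =
      if x ∈ famU D then lam else if x = 0 then 0 else mu

/-- `(n,m,k,λ,μ)`-external partial difference family:
sets in `G*`, `⋃_{i≠j} Δ(Dᵢ,Dⱼ) = λ(S) + μ(G* \ S)` where `S = ⋃ᵢ Dᵢ`. -/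
def IsEPDF (n m k : ℕ) (lam mu : ℤ) (D : ι → Finset G) : Prop :=
  FamShape n m k D ∧ (∀ i, (0 : G) ∉ D i) ∧
    ∀ x : G, ((famExt D).count x : ℤ) =
      if x ∈ famU D then lam else if x = 0 then 0 else mu

end Defs

section FieldDefs

variable {F : Type*} [Field F] [DecidableEq F]

/-- `α` is a primitive element: every nonzero element is a power of `α`. -/
def IsPrimitiveElt (α : F) : Prop := ∀ x : F, x ≠ 0 → ∃ k : ℕ, x = α ^ k

/-- The coset `α^i⟨α^e⟩` of the cyclotomic class of order `e` (of size `f`). -/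
def cyclo (α : F) (e f i : ℕ) : Finset F :=
  (Finset.range f).image fun j => α ^ (i + e * j)

/-- The cyclotomic number `(i,j)_e`: the number of pairs `(zᵢ, zⱼ) ∈ Cᵢ × Cⱼ` with `zᵢ + 1 = zⱼ`. -/
def cycNum (α : F) (e f i j : ℕ) : ℕ :=
  ((cyclo α e f i ×ˢ cyclo α e f j).filter fun p => p.1 + 1 = p.2).card

/-- `Φᵢ = {x ∈ C₀^e : x ≠ 1, x - 1 ∈ α^i C₀^ε}`. -/
def Phi (α : F) (e f ε ρ i : ℕ) : Finset F :=
  (cyclo α e f 0).filter fun x => x ≠ 1 ∧ x - 1 ∈ cyclo α ε ρ i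

/-- `φᵢ = |Φᵢ|`. -/
def phi (α : F) (e f ε ρ i : ℕ) : ℕ := (Phi α e f ε ρ i).card

end FieldDefs

/-!
Write `S = C₀^ε` and `Dᵢ = C_{εi}^e`. The `Dᵢ` partition `S`, so
`Δ(S) = ⋃ᵢ Δ(Dᵢ) + ⋃_{i ≠ j} Δ(Dᵢ, Dⱼ)`, and `Δ(S)` is known from the PDS parameters. For
`x ∈ α^r C₀^ε`, the representations `x = a - b` with `a, b` in a common `Dᵢ` correspond
bijectively to `t = a / b ∈ Φ_r`, so `x` occurs `φ_r` times among the internal differences.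
If `φ₁ = ⋯ = φ_{ε-1}` the family is therefore a `(q, e/ε, f, φ₀, φ₁)`-DPDF, and the external
differences occur `λ - φ₀` times on `S` and `μ - φ₁` times off `S`; otherwise `α^i` and `α^j`
are two elements off `S` with different multiplicities. The DDF and EDF cases are those in which
one of these two pairs coincides, and counting all differences then gives `ε φ₀ = f - 1`,
resp. `ε² b = (e - ε) f`.
-/
theorem Finset.val_biUnion_of_pairwiseDisjoint {ι β : Type*} [DecidableEq β] {s : Finset ι}
    {t : ι → Finset β} (h : (s : Set ι).PairwiseDisjoint t) :
    (s.biUnion t).val = ∑ i ∈ s, (t i).val := by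
  rw [← Finset.disjiUnion_eq_biUnion s t h, Finset.disjiUnion_val, Finset.sum_eq_multiset_sum]
  rfl

section DifferenceMultisets

variable {G : Type*} [AddGroup G] {ι : Type*} [Fintype ι]

theorem count_intDiff [DecidableEq G] (D : Finset G) (x : G) :
    (intDiff D).count x = #{p ∈ D ×ˢ D | p.1 ≠ p.2 ∧ p.1 - p.2 = x} := by
  rw [intDiff, Multiset.count_map, ← Finset.filter_val, Finset.filter_filter, Finset.card_def]
  simp only [eq_comm]

theorem count_zero_famInt [DecidableEq G] (D : ι → Finset G) : (famInt D).count 0 = 0 := by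
  simp [famInt, Multiset.count_sum', count_intDiff, sub_eq_zero]

theorem card_intDiff [DecidableEq G] (D : Finset G) :
    Multiset.card (intDiff D) = #D * (#D - 1) := by
  have hoff : ((D ×ˢ D).filter fun p => p.1 ≠ p.2) = D.offDiag := by
    ext p
    simp [Finset.mem_offDiag, and_assoc]
  rw [intDiff, Multiset.card_map, ← Finset.card_def, hoff, Finset.offDiag_card, Nat.mul_sub_one]

theorem card_famInt [DecidableEq G] {D : ι → Finset G} {k : ℕ} (hk : ∀ i, #(D i) = k) :
    Multiset.card (famInt D) = Fintype.card ι * (k * (k - 1)) := by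
  simp [famInt, Multiset.card_sum, card_intDiff, hk]

theorem card_famExt [DecidableEq ι] {D : ι → Finset G} {k : ℕ} (hk : ∀ i, #(D i) = k) :
    Multiset.card (famExt D) = Fintype.card ι * ((Fintype.card ι - 1) * (k * k)) := by
  simp [famExt, Multiset.card_sum, extDiff, hk, Finset.sum_ite, Finset.filter_ne']

theorem card_eq_of_count_eq_ite [DecidableEq G] [Fintype G] {s : Multiset G} {c : ℤ}
    (h : ∀ x, (s.count x : ℤ) = if x = 0 then 0 else c) :
    (Multiset.card s : ℤ) = c * (Fintype.card G - 1) := by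
  rw [← Multiset.sum_count_eq_card (s := univ) fun a _ => mem_univ a, Nat.cast_sum]
  simp [h, Finset.sum_ite, Finset.filter_ne', Nat.cast_sub Fintype.card_pos, mul_comm]

theorem intDiff_famU [DecidableEq G] [DecidableEq ι] {D : ι → Finset G}
    (hD : Pairwise fun i j => Disjoint (D i) (D j)) :
    intDiff (famU D) = famInt D + famExt D := by
  have hprod : famU D ×ˢ famU D = univ.biUnion fun ij : ι × ι => D ij.1 ×ˢ D ij.2 := by
    ext p
    simp [famU]
  have hdisj : ((univ : Finset (ι × ι)) : Set (ι × ι)).PairwiseDisjoint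
      fun ij => D ij.1 ×ˢ D ij.2 := by
    rintro ⟨i, j⟩ - ⟨i', j'⟩ - hne
    by_cases hi : i = i'
    · subst hi
      exact Finset.disjoint_product.2 (Or.inr (hD fun h => hne (Prod.ext rfl h)))
    · exact Finset.disjoint_product.2 (Or.inl (hD hi))
  have hblock : ∀ i j, (((D i ×ˢ D j).filter fun p => p.1 ≠ p.2).val.map fun p => p.1 - p.2) =
      if j = i then intDiff (D i) else extDiff (D i) (D j) := by
    intro i j
    split_ifs with h
    · subst h
      rfl
    · rw [extDiff, Finset.filter_true_of_mem]
      rintro ⟨a, b⟩ hab (rfl : a = b)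
      simp only [Finset.mem_product] at hab
      exact Finset.disjoint_left.1 (hD fun h' => h h'.symm) hab.1 hab.2
  have hsplit : ∀ i j, (if j = i then intDiff (D i) else extDiff (D i) (D j)) =
      (if j = i then intDiff (D i) else 0) + if j = i then 0 else extDiff (D i) (D j) := by
    intro i j
    split_ifs <;> simp
  rw [intDiff, hprod, Finset.filter_biUnion,
    Finset.val_biUnion_of_pairwiseDisjoint (hdisj.mono fun ij => Finset.filter_subset _ _),
    ← Multiset.coe_mapAddMonoidHom, map_sum, Fintype.sum_prod_type, famInt, famExt,
    ← Finset.sum_add_distrib]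
  refine Finset.sum_congr rfl fun i _ => ?_
  simp only [Multiset.coe_mapAddMonoidHom, hblock, hsplit, Finset.sum_add_distrib,
    Finset.sum_ite_eq', Finset.mem_univ, if_true]

theorem ite_mem_famU_of_zero_notMem [DecidableEq G] {D : ι → Finset G} {c : ℤ}
    (h0 : ∀ i, (0 : G) ∉ D i) (x : G) :
    (if x ∈ famU D then c else if x = 0 then 0 else c) = if x = 0 then 0 else c := by
  have : (0 : G) ∉ famU D := by simpa [famU] using h0
  split_ifs <;> simp_all

end DifferenceMultisets

section DifferenceFamilies

variable {G : Type*} [AddGroup G] [DecidableEq G] [Fintype G] {ι : Type*} [Fintype ι]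
  {D : ι → Finset G} {n m k : ℕ}

theorem isEPDF_iff_isDPDF [DecidableEq ι] {k' : ℕ} {lam mu a b : ℤ}
    (hS : IsPDS n k' lam mu (famU D)) :
    IsEPDF n m k a b D ↔ IsDPDF n m k (lam - a) (mu - b) D := by
  refine and_congr_right fun hD => and_congr_right fun _ => forall_congr' fun x => ?_
  have hsplit := congrArg (Multiset.count x) (intDiff_famU hD.2.2.2)
  rw [Multiset.count_add] at hsplit
  have hx := hS.2.2 x
  split_ifs at hx ⊢ <;> omega

theorem not_isDPDF_of_count_ne {x y : G} (hx0 : x ≠ 0) (hy0 : y ≠ 0) (hx : x ∉ famU D)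
    (hy : y ∉ famU D) (hxy : (famInt D).count x ≠ (famInt D).count y) {a b : ℤ} :
    ¬ IsDPDF n m k a b D := by
  rintro ⟨-, -, h⟩
  have hx' := h x
  have hy' := h y
  rw [if_neg hx, if_neg hx0] at hx'
  rw [if_neg hy, if_neg hy0] at hy'
  exact hxy (by exact_mod_cast hx'.trans hy'.symm)

theorem IsDPDF.isDDF {c : ℤ} (h : IsDPDF n m k c c D) : IsDDF n m k c D :=
  ⟨h.1, fun x => (h.2.2 x).trans (ite_mem_famU_of_zero_notMem h.2.1 x)⟩

theorem IsEPDF.isEDF [DecidableEq ι] {c : ℤ} (h : IsEPDF n m k c c D) : IsEDF n m k c D :=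
  ⟨h.1, fun x => (h.2.2 x).trans (ite_mem_famU_of_zero_notMem h.2.1 x)⟩

theorem isDDF_and_isEPDF_of_isDPDF [DecidableEq ι] {k' : ℕ} {lam mu c : ℤ}
    (hS : IsPDS n k' lam mu (famU D)) (h : IsDPDF n m k c c D) :
    IsDDF n m k c D ∧ IsEPDF n m k (lam - c) (mu - c) D :=
  ⟨h.isDDF, (isEPDF_iff_isDPDF hS).2 (by simpa only [sub_sub_cancel] using h)⟩

theorem isEDF_and_isDPDF_of_isEPDF [DecidableEq ι] {k' : ℕ} {lam mu c : ℤ}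
    (hS : IsPDS n k' lam mu (famU D)) (h : IsEPDF n m k c c D) :
    IsEDF n m k c D ∧ IsDPDF n m k (lam - c) (mu - c) D :=
  ⟨h.isEDF, (isEPDF_iff_isDPDF hS).1 h⟩

theorem IsDDF.card_eq {c : ℤ} (h : IsDDF n m k c D) :
    ((m * (k * (k - 1)) : ℕ) : ℤ) = c * (n - 1) := by
  obtain ⟨⟨rfl, rfl, hk, -⟩, hc⟩ := h
  rw [← card_famInt hk]
  exact card_eq_of_count_eq_ite hc

theorem IsEDF.card_eq [DecidableEq ι] {c : ℤ} (h : IsEDF n m k c D) :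
    ((m * ((m - 1) * (k * k)) : ℕ) : ℤ) = c * (n - 1) := by
  obtain ⟨⟨rfl, rfl, hk, -⟩, hc⟩ := h
  rw [← card_famExt hk]
  exact card_eq_of_count_eq_ite hc

theorem IsEDF.nonneg [DecidableEq ι] [Nontrivial G] {c : ℤ} (h : IsEDF n m k c D) : 0 ≤ c := by
  obtain ⟨x, hx⟩ := exists_ne (0 : G)
  have := h.2 x
  rw [if_neg hx] at this
  omega

end DifferenceFamilies

theorem Nat.exists_lt_add_mul_modEq {d s i m : ℕ} (hs : 0 < s) (h : m ≡ i [MOD d]) :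
    ∃ j < s, i + d * j ≡ m [MOD d * s] := by
  -- `m + d s i` lies in the class of `m` modulo `d s` and is at least `i`
  have hle : i ≤ m + d * s * i := by
    rcases Nat.eq_zero_or_pos d with rfl | hd
    · exact (Nat.modEq_zero_iff.1 h).ge.trans (Nat.le_add_right _ _)
    · exact Nat.le_add_left_of_le (Nat.le_mul_of_pos_left i (by positivity))
  have hm : m + d * s * i ≡ i [MOD d] :=
    calc m + d * s * i ≡ m + 0 [MOD d] :=
          Nat.ModEq.add_left m (Nat.modEq_zero_iff_dvd.2 (Dvd.dvd.mul_right (dvd_mul_right d s) i))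
      _ ≡ i [MOD d] := h
  obtain ⟨c, hc⟩ := (Nat.modEq_iff_dvd' hle).1 hm.symm
  refine ⟨c % s, Nat.mod_lt c hs, ?_⟩
  calc i + d * (c % s) ≡ i + d * c [MOD d * s] :=
        Nat.ModEq.add_left i (Nat.ModEq.mul_left' d (Nat.mod_modEq c s))
    _ = m + d * s * i := by omega
    _ ≡ m [MOD d * s] := Nat.add_mul_mod_self_left m (d * s) i

section Cyclotomic

variable {F : Type*} [Field F] [DecidableEq F] {α : F} {d s : ℕ}

theorem mem_cyclo (hα : IsOfFinOrder α) (hds : d * s = orderOf α) {i : ℕ} {x : F} :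
    x ∈ cyclo α d s i ↔ ∃ m, x = α ^ m ∧ m ≡ i [MOD d] := by
  constructor
  · simp only [cyclo, Finset.mem_image, Finset.mem_range]
    rintro ⟨j, -, rfl⟩
    exact ⟨i + d * j, rfl, Nat.add_mul_mod_self_left i d j⟩
  · rintro ⟨m, rfl, hm⟩
    have hs : 0 < s := Nat.pos_of_mul_pos_left (hds ▸ hα.orderOf_pos)
    obtain ⟨j, hj, hjm⟩ := Nat.exists_lt_add_mul_modEq hs hm
    refine Finset.mem_image.2 ⟨j, Finset.mem_range.2 hj, hα.pow_eq_pow_iff_modEq.2 ?_⟩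
    rwa [← hds]

theorem pow_mem_cyclo (hα : IsOfFinOrder α) (hds : d * s = orderOf α) (i : ℕ) :
    α ^ i ∈ cyclo α d s i :=
  (mem_cyclo hα hds).2 ⟨i, rfl, rfl⟩

theorem zero_notMem_cyclo (hα : IsOfFinOrder α) (i : ℕ) : (0 : F) ∉ cyclo α d s i := by
  simp only [cyclo, Finset.mem_image]
  rintro ⟨j, -, hj⟩
  exact pow_ne_zero _ hα.isUnit.ne_zero hj

theorem ne_zero_of_mem_cyclo (hα : IsOfFinOrder α) {i : ℕ} {x : F} (hx : x ∈ cyclo α d s i) :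
    x ≠ 0 :=
  ne_of_mem_of_not_mem hx (zero_notMem_cyclo hα i)

theorem card_cyclo (hα : IsOfFinOrder α) (hds : d * s = orderOf α) (i : ℕ) :
    #(cyclo α d s i) = s := by
  have hd : d ≠ 0 := fun h => hα.orderOf_pos.ne' (by rw [← hds, h, zero_mul])
  rw [cyclo, Finset.card_image_of_injOn, Finset.card_range]
  intro j hj j' hj' hjj
  have h := hα.pow_eq_pow_iff_modEq.1 hjj
  rw [← hds] at h
  exact Nat.ModEq.eq_of_lt_of_lt ((Nat.ModEq.add_left_cancel' i h).mul_left_cancel' hd)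
    (Finset.mem_range.1 hj) (Finset.mem_range.1 hj')

theorem modEq_of_mem_cyclo (hα : IsOfFinOrder α) (hds : d * s = orderOf α) {i j : ℕ} {x : F}
    (hi : x ∈ cyclo α d s i) (hj : x ∈ cyclo α d s j) : i ≡ j [MOD d] := by
  obtain ⟨m, rfl, hm⟩ := (mem_cyclo hα hds).1 hi
  obtain ⟨m', he, hm'⟩ := (mem_cyclo hα hds).1 hj
  have h := hα.pow_eq_pow_iff_modEq.1 he
  rw [← hds] at h
  exact hm.symm.trans ((h.of_mul_right s).trans hm')

theorem exists_mem_cyclo (hprim : IsPrimitiveElt α) (hα : IsOfFinOrder α)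
    (hds : d * s = orderOf α) {x : F} (hx : x ≠ 0) : ∃ r < d, x ∈ cyclo α d s r := by
  obtain ⟨k, rfl⟩ := hprim x hx
  exact ⟨k % d, Nat.mod_lt k (Nat.pos_of_mul_pos_right (hds ▸ hα.orderOf_pos)),
    (mem_cyclo hα hds).2 ⟨k, rfl, (Nat.mod_modEq k d).symm⟩⟩

theorem pow_notMem_cyclo_zero (hα : IsOfFinOrder α) (hds : d * s = orderOf α) {k : ℕ}
    (hk : 0 < k) (hkd : k < d) : α ^ k ∉ cyclo α d s 0 := fun h =>
  hk.ne' ((modEq_of_mem_cyclo hα hds (pow_mem_cyclo hα hds k) h).eq_of_lt_of_lt hkd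
    (hk.trans hkd))

theorem mul_mem_cyclo (hα : IsOfFinOrder α) (hds : d * s = orderOf α) {i j : ℕ} {a b : F}
    (ha : a ∈ cyclo α d s i) (hb : b ∈ cyclo α d s j) : a * b ∈ cyclo α d s (i + j) := by
  obtain ⟨m, rfl, hm⟩ := (mem_cyclo hα hds).1 ha
  obtain ⟨n, rfl, hn⟩ := (mem_cyclo hα hds).1 hb
  exact (mem_cyclo hα hds).2 ⟨m + n, (pow_add α m n).symm, hm.add hn⟩

theorem mem_cyclo_of_mul_mem (hα : IsOfFinOrder α) (hds : d * s = orderOf α) {i j : ℕ}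
    {a b : F} (hb : b ∈ cyclo α d s j) (hab : a * b ∈ cyclo α d s (i + j)) :
    a ∈ cyclo α d s i := by
  obtain ⟨n, rfl, hn⟩ := (mem_cyclo hα hds).1 hb
  obtain ⟨m, hm, hmij⟩ := (mem_cyclo hα hds).1 hab
  obtain ⟨N, hN⟩ := Nat.exists_eq_add_one_of_ne_zero hα.orderOf_pos.ne'
  have hinv : α ^ n * α ^ (n * N) = 1 := by
    rw [← pow_add, show n + n * N = orderOf α * n by rw [hN]; ring, pow_mul, pow_orderOf_eq_one,
      one_pow]
  have ha : a = α ^ (m + n * N) := by rw [pow_add, ← hm, mul_assoc, hinv, mul_one]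
  refine (mem_cyclo hα hds).2 ⟨_, ha, ?_⟩
  have hjN : j * (N + 1) ≡ 0 [MOD d] :=
    Nat.modEq_zero_iff_dvd.2 (Dvd.dvd.mul_left ⟨s, (hds.trans hN).symm⟩ j)
  calc m + n * N ≡ i + j + j * N [MOD d] := hmij.add (hn.mul_right N)
    _ = i + j * (N + 1) := by ring
    _ ≡ i + 0 [MOD d] := hjN.add_left i

-- the family `C₀^ε′ = {C_{εi}^e : 0 ≤ i < e/ε}`
def cycloFamily (α : F) (e f eps : ℕ) (i : Fin (e / eps)) : Finset F := cyclo α e f (eps * i)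

section Family

variable {e f eps rho : ℕ} (hα : IsOfFinOrder α) (hef : e * f = orderOf α)
  (herho : eps * rho = orderOf α) (hepse : eps ∣ e)

include hα hef herho hepse

theorem pairwise_disjoint_cycloFamily :
    Pairwise fun i j => Disjoint (cycloFamily α e f eps i) (cycloFamily α e f eps j) := by
  intro i j hij
  refine Finset.disjoint_left.2 fun x hi hj => hij (Fin.ext ?_)
  have heps : 0 < eps := Nat.pos_of_mul_pos_right (herho ▸ hα.orderOf_pos)
  exact Nat.eq_of_mul_eq_mul_left heps ((modEq_of_mem_cyclo hα hef hi hj).eq_of_lt_of_lt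
    ((Nat.lt_div_iff_mul_lt' hepse _).1 i.2) ((Nat.lt_div_iff_mul_lt' hepse _).1 j.2))

theorem famU_cycloFamily : famU (cycloFamily α e f eps) = cyclo α eps rho 0 := by
  ext x
  simp only [famU, Finset.mem_biUnion, Finset.mem_univ, true_and]
  constructor
  · rintro ⟨i, hi⟩
    obtain ⟨m, rfl, hm⟩ := (mem_cyclo hα hef).1 hi
    exact (mem_cyclo hα herho).2
      ⟨m, rfl, (hm.of_dvd hepse).trans (Nat.modEq_zero_iff_dvd.2 (dvd_mul_right _ _))⟩
  · intro hx
    obtain ⟨m, rfl, hm⟩ := (mem_cyclo hα herho).1 hx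
    obtain ⟨i, hi⟩ : eps ∣ m % e := (Nat.dvd_mod_iff hepse).2 (Nat.modEq_zero_iff_dvd.1 hm)
    have hie : i < e / eps := (Nat.lt_div_iff_mul_lt' hepse i).2
      (hi ▸ Nat.mod_lt m (Nat.pos_of_mul_pos_right (hef ▸ hα.orderOf_pos)))
    exact ⟨⟨i, hie⟩, (mem_cyclo hα hef).2 ⟨m, rfl, hi ▸ (Nat.mod_modEq m e).symm⟩⟩

theorem mul_inv_mem_Phi {i : Fin (e / eps)} {r : ℕ} {a b : F} (ha : a ∈ cycloFamily α e f eps i)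
    (hb : b ∈ cycloFamily α e f eps i) (hab : a ≠ b) (hx : a - b ∈ cyclo α eps rho r) :
    a * b⁻¹ ∈ Phi α e f eps rho r := by
  have hb0 := ne_zero_of_mem_cyclo hα hb
  have htb : a * b⁻¹ * b = a := inv_mul_cancel_right₀ hb0 a
  have ht1b : (a * b⁻¹ - 1) * b = a - b := by rw [sub_mul, htb, one_mul]
  have hbS : b ∈ cyclo α eps rho 0 :=
    famU_cycloFamily hα hef herho hepse ▸ Finset.mem_biUnion.2 ⟨i, Finset.mem_univ _, hb⟩
  refine Finset.mem_filter.2 ⟨mem_cyclo_of_mul_mem hα hef hb (by rwa [zero_add, htb]),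
    fun h => hab ?_, mem_cyclo_of_mul_mem hα herho hbS (by rwa [add_zero, ht1b])⟩
  rw [← htb, h, one_mul]

theorem exists_mem_cycloFamily_of_mem_Phi {r : ℕ} {t x : F} (ht : t ∈ Phi α e f eps rho r)
    (hx : x ∈ cyclo α eps rho r) :
    ∃ i, t * (x * (t - 1)⁻¹) ∈ cycloFamily α e f eps i ∧
      x * (t - 1)⁻¹ ∈ cycloFamily α e f eps i := by
  obtain ⟨ht0, ht1, htr⟩ := Finset.mem_filter.1 ht
  have hbt : x * (t - 1)⁻¹ * (t - 1) = x := inv_mul_cancel_right₀ (sub_ne_zero.2 ht1) x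
  have hb : x * (t - 1)⁻¹ ∈ cyclo α eps rho 0 :=
    mem_cyclo_of_mul_mem hα herho htr (by rwa [zero_add, hbt])
  obtain ⟨i, -, hbi⟩ := Finset.mem_biUnion.1 (famU_cycloFamily hα hef herho hepse ▸ hb)
  have htb := mul_mem_cyclo hα hef ht0 hbi
  rw [zero_add] at htb
  exact ⟨i, htb, hbi⟩

theorem count_famInt_cycloFamily {r : ℕ} {x : F} (hx : x ∈ cyclo α eps rho r) :
    (famInt (cycloFamily α e f eps)).count x = phi α e f eps rho r := by
  rw [famInt, Multiset.count_sum', phi]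
  simp only [count_intDiff]
  rw [← Finset.card_sigma]
  -- the inverse map is `t ↦ (t b, b)` with `b = x / (t - 1)`
  refine Finset.card_bij (fun p _ => p.2.1 * p.2.2⁻¹) ?_ ?_ ?_
  · rintro ⟨i, a, b⟩ hp
    simp only [Finset.mem_sigma, Finset.mem_filter, Finset.mem_product, Finset.mem_univ,
      true_and] at hp
    obtain ⟨⟨ha, hb⟩, hab, rfl⟩ := hp
    exact mul_inv_mem_Phi hα hef herho hepse ha hb hab hx
  · rintro ⟨i, a, b⟩ hp ⟨i', a', b'⟩ hp' heq
    simp only [Finset.mem_sigma, Finset.mem_filter, Finset.mem_product, Finset.mem_univ,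
      true_and] at hp hp'
    obtain ⟨⟨ha, hb⟩, hab, hx⟩ := hp
    obtain ⟨⟨ha', hb'⟩, hab', hx'⟩ := hp'
    have hb0 := ne_zero_of_mem_cyclo hα hb
    have ht : a * b⁻¹ - 1 ≠ 0 := fun h => hab (by rwa [sub_eq_zero, mul_inv_eq_one₀ hb0] at h)
    have h1 : (a * b⁻¹ - 1) * b = x := by rw [sub_mul, inv_mul_cancel_right₀ hb0, one_mul, hx]
    have h2 : (a * b⁻¹ - 1) * b' = x := by
      rw [heq, sub_mul, inv_mul_cancel_right₀ (ne_zero_of_mem_cyclo hα hb'), one_mul, hx']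
    obtain rfl : b = b' := mul_left_cancel₀ ht (h1.trans h2.symm)
    obtain rfl : a = a' := mul_right_cancel₀ (inv_ne_zero hb0) heq
    obtain rfl : i = i' := by
      by_contra hii
      exact Finset.disjoint_left.1 (pairwise_disjoint_cycloFamily hα hef herho hepse hii) hb hb'
    rfl
  · intro t ht
    have ht1 : t ≠ 1 := (Finset.mem_filter.1 ht).2.1
    obtain ⟨i, htb, hb⟩ := exists_mem_cycloFamily_of_mem_Phi hα hef herho hepse ht hx
    have hb0 := ne_zero_of_mem_cyclo hα hb
    refine ⟨⟨i, _, _⟩, ?_, mul_inv_cancel_right₀ hb0 t⟩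
    simp only [Finset.mem_sigma, Finset.mem_filter, Finset.mem_product, Finset.mem_univ, true_and]
    refine ⟨⟨htb, hb⟩, fun h => ht1 ((mul_eq_right₀ hb0).1 h), ?_⟩
    rw [← sub_one_mul, mul_comm, inv_mul_cancel_right₀ (sub_ne_zero.2 ht1)]

theorem isDPDF_cycloFamily [Fintype F] (hprim : IsPrimitiveElt α)
    (hphi : ∀ j, 1 ≤ j → j ≤ eps - 1 → phi α e f eps rho j = phi α e f eps rho 1) :
    IsDPDF (Fintype.card F) (e / eps) f (phi α e f eps rho 0) (phi α e f eps rho 1)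
      (cycloFamily α e f eps) := by
  have hU := famU_cycloFamily hα hef herho hepse
  refine ⟨⟨rfl, Fintype.card_fin _, fun i => card_cyclo hα hef _,
    fun i j hij => pairwise_disjoint_cycloFamily hα hef herho hepse hij⟩,
    fun i => zero_notMem_cyclo hα _, fun x => ?_⟩
  split_ifs with hxU hx0
  · rw [hU] at hxU
    rw [count_famInt_cycloFamily hα hef herho hepse hxU]
  · rw [hx0, count_zero_famInt, Nat.cast_zero]
  · obtain ⟨r, hr, hxr⟩ := exists_mem_cyclo hprim hα herho hx0
    have hr0 : r ≠ 0 := by rintro rfl; exact hxU (hU ▸ hxr)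
    rw [count_famInt_cycloFamily hα hef herho hepse hxr, hphi r (by omega) (by omega)]

theorem not_isDPDF_cycloFamily_of_phi_ne [Fintype F] {i j n m k : ℕ} (hi : 0 < i) (hie : i < eps)
    (hj : 0 < j) (hje : j < eps) (hne : phi α e f eps rho i ≠ phi α e f eps rho j) {a b : ℤ} :
    ¬ IsDPDF n m k a b (cycloFamily α e f eps) := by
  have hU := famU_cycloFamily hα hef herho hepse
  refine not_isDPDF_of_count_ne (pow_ne_zero i hα.isUnit.ne_zero)
    (pow_ne_zero j hα.isUnit.ne_zero) (hU ▸ pow_notMem_cyclo_zero hα herho hi hie)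
    (hU ▸ pow_notMem_cyclo_zero hα herho hj hje) ?_
  rwa [count_famInt_cycloFamily hα hef herho hepse (pow_mem_cyclo hα herho i),
    count_famInt_cycloFamily hα hef herho hepse (pow_mem_cyclo hα herho j)]

end Family

end Cyclotomic

theorem IsPrimitiveElt.orderOf_eq {F : Type*} [Field F] [Fintype F] [DecidableEq F] {α : F}
    (hα : IsPrimitiveElt α) (hF : 2 < Fintype.card F) : orderOf α = Fintype.card F - 1 := by
  have hα0 : α ≠ 0 := by
    rintro rfl
    have hsub : (univ : Finset F) ⊆ {0, 1} := fun x _ => by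
      by_cases hx : x = 0
      · simp [hx]
      · obtain ⟨k, rfl⟩ := hα x hx
        rcases k with _ | k <;> simp
    have := (card_le_card hsub).trans card_le_two
    rw [card_univ] at this
    omega
  rw [← Units.val_mk0 hα0, orderOf_units, orderOf_eq_card_of_forall_mem_powers, Nat.card_units,
    Nat.card_eq_fintype_card]
  intro x
  obtain ⟨k, hk⟩ := hα x x.ne_zero
  exact ⟨k, Units.ext (by simp [hk])⟩

theorem eps_mul_eq_of_div_mul_eq {e f eps a c : ℕ} (hepse : eps ∣ e) (hef : 0 < e * f)
    (h : e / eps * (f * c) = a * (e * f)) : eps * a = c := by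
  refine Nat.eq_of_mul_eq_mul_left hef ?_
  calc e * f * (eps * a) = eps * (a * (e * f)) := by ring
    _ = eps * (e / eps) * f * c := by rw [← h]; ring
    _ = e * f * c := by rw [Nat.mul_div_cancel' hepse]

theorem eps_mul_eq_of_isDDF {G : Type*} [AddGroup G] [DecidableEq G] [Fintype G] {e f eps a : ℕ}
    {D : Fin (e / eps) → Finset G} (hepse : eps ∣ e) (hef : 0 < e * f)
    (h : IsDDF (e * f + 1) (e / eps) f a D) : eps * a = f - 1 := by
  have hcard := h.card_eq
  rw [Nat.cast_add_one, add_sub_cancel_right, ← Nat.cast_mul] at hcard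
  exact eps_mul_eq_of_div_mul_eq hepse hef (Nat.cast_injective hcard)

theorem eps_sq_mul_eq_of_isEDF {G : Type*} [AddGroup G] [DecidableEq G] [Fintype G]
    {e f eps b : ℕ} {D : Fin (e / eps) → Finset G} (hepse : eps ∣ e) (hef : 0 < e * f)
    (h : IsEDF (e * f + 1) (e / eps) f b D) : eps ^ 2 * b = (e - eps) * f := by
  have hcard := h.card_eq
  rw [Nat.cast_add_one, add_sub_cancel_right, ← Nat.cast_mul] at hcard
  have hb := eps_mul_eq_of_div_mul_eq (c := (e / eps - 1) * f) hepse hef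
    (by rw [← mul_assoc f, mul_comm f, mul_assoc]; exact Nat.cast_injective hcard)
  rw [sq, mul_assoc, hb, ← mul_assoc, Nat.mul_sub_one, Nat.mul_div_cancel' hepse]

theorem partition_of_pds_dpdf_epdf_general {F : Type*} [Field F] [Fintype F] [DecidableEq F]
    (q e f eps rho : ℕ) (lam mu : ℤ) (α : F)
    (hq : Fintype.card F = q) (hα : IsPrimitiveElt α)
    (hef : q = e * f + 1) (he : 1 < e) (hf : 1 < f)
    (herho : q = eps * rho + 1) (hepse : eps ∣ e)
    (hPDS : IsPDS q rho lam mu (cyclo α eps rho 0)) :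
    ∀ D : Fin (e / eps) → Finset F, D = (fun i : Fin (e / eps) => cyclo α e f (eps * (i : ℕ))) →
    ((∃ i j, 1 ≤ i ∧ i ≤ eps - 1 ∧ 1 ≤ j ∧ j ≤ eps - 1 ∧ i ≠ j ∧
        phi α e f eps rho i ≠ phi α e f eps rho j) →
      (¬ ∃ a b : ℤ, IsDPDF q (e / eps) f a b D) ∧
      (¬ ∃ a b : ℤ, IsEPDF q (e / eps) f a b D)) ∧
    ((∀ j, 1 ≤ j → j ≤ eps - 1 → phi α e f eps rho j = phi α e f eps rho 1) →
      (((phi α e f eps rho 1 : ℤ) - (phi α e f eps rho 0 : ℤ) = 0 →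
         ∃ a : ℕ, eps * a = f - 1 ∧ IsDDF q (e / eps) f (a : ℤ) D ∧
           IsEPDF q (e / eps) f (lam - (a : ℤ)) (mu - (a : ℤ)) D) ∧
       ((phi α e f eps rho 1 : ℤ) - (phi α e f eps rho 0 : ℤ) = mu - lam →
         ∃ b : ℕ, eps ^ 2 * b = (e - eps) * f ∧ IsEDF q (e / eps) f (b : ℤ) D ∧
           IsDPDF q (e / eps) f (lam - (b : ℤ)) (mu - (b : ℤ)) D) ∧
       ((phi α e f eps rho 1 : ℤ) - (phi α e f eps rho 0 : ℤ) ≠ 0 →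
        (phi α e f eps rho 1 : ℤ) - (phi α e f eps rho 0 : ℤ) ≠ mu - lam →
         (IsDPDF q (e / eps) f (phi α e f eps rho 0 : ℤ) (phi α e f eps rho 1 : ℤ) D ∧
          (phi α e f eps rho 0 : ℤ) ≠ (phi α e f eps rho 1 : ℤ) ∧
          IsEPDF q (e / eps) f (lam - (phi α e f eps rho 0 : ℤ))
            (mu - (phi α e f eps rho 1 : ℤ)) D ∧
          lam - (phi α e f eps rho 0 : ℤ) ≠ mu - (phi α e f eps rho 1 : ℤ))))) := by
  rintro D (rfl : D = cycloFamily α e f eps)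
  subst hef
  have hef0 : 0 < e * f := by positivity
  have hN : e * f = orderOf α := by rw [hα.orderOf_eq (by rw [hq]; nlinarith), hq]; rfl
  have hfin : IsOfFinOrder α := orderOf_pos_iff.1 (hN ▸ hef0)
  have hρ : eps * rho = orderOf α := by omega
  have hPDS' : IsPDS (e * f + 1) rho lam mu (famU (cycloFamily α e f eps)) :=
    famU_cycloFamily hfin hN hρ hepse ▸ hPDS
  refine ⟨fun ⟨i, j, hi1, hi, hj1, hj, _, hne⟩ => ?_, fun hphi => ?_⟩
  · have h : ∀ a b : ℤ, ¬ IsDPDF (e * f + 1) (e / eps) f a b (cycloFamily α e f eps) := fun _ _ =>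
      not_isDPDF_cycloFamily_of_phi_ne hfin hN hρ hepse hi1 (by omega) hj1 (by omega) hne
    exact ⟨fun ⟨_, _, hD⟩ => h _ _ hD, fun ⟨_, _, hE⟩ => h _ _ ((isEPDF_iff_isDPDF hPDS').1 hE)⟩
  set φ₀ := phi α e f eps rho 0
  set φ₁ := phi α e f eps rho 1
  have hDPDF := hq ▸ isDPDF_cycloFamily hfin hN hρ hepse hα hphi
  have hEPDF : IsEPDF _ _ _ (lam - φ₀) (mu - φ₁) _ :=
    (isEPDF_iff_isDPDF hPDS').2 (by simpa only [sub_sub_cancel] using hDPDF)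
  refine ⟨fun hκ => ?_, fun hκ => ?_, fun hκ0 hκ => ⟨hDPDF, by omega, hEPDF, by omega⟩⟩
  · obtain ⟨hDDF, hE⟩ := isDDF_and_isEPDF_of_isDPDF hPDS'
      ((show (φ₁ : ℤ) = φ₀ by omega) ▸ hDPDF)
    exact ⟨φ₀, eps_mul_eq_of_isDDF hepse hef0 hDDF, hDDF, hE⟩
  · obtain ⟨hEDF, hD⟩ := isEDF_and_isDPDF_of_isEPDF hPDS'
      ((show mu - φ₁ = lam - φ₀ by omega) ▸ hEPDF)
    obtain ⟨b, hb⟩ := Int.eq_ofNat_of_zero_le hEDF.nonneg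
    rw [hb] at hEDF hD
    exact ⟨b, eps_sq_mul_eq_of_isEDF hepse hef0 hEDF, hEDF, hD⟩

/-- Theorem: let `q = ef+1 = ερ+1` with `ε ∣ e`, `e > ε`, and `C₀^ε` a proper
`(q,ef/ε,λ,μ)`-PDS.  (i) If `φ_i ≠ φ_j` for distinct `i,j ∈ {1,…,ε-1}` then `C₀^ε′` is
neither a DPDF nor an EPDF.  Otherwise, with `κ = φ₁ - φ₀`: (ii) if `κ = 0` then `C₀^ε′` is a
`(q,e/ε,f,(f-1)/ε)`-DDF and a `(q,e/ε,f,λ-(f-1)/ε,μ-(f-1)/ε)`-EPDF; (iii) if `κ = μ-λ` then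
`C₀^ε′` is a `(q,e/ε,f,(e-ε)f/ε²)`-EDF and a `(q,e/ε,f,λ-(e-ε)f/ε²,μ-(e-ε)f/ε²)`-DPDF;
(iv) if `κ ∉ {0, μ-λ}` then `C₀^ε′` is a proper `(q,e/ε,f,φ₀,φ₀+κ)`-DPDF and a proper
`(q,e/ε,f,λ-φ₀,μ-φ₀-κ)`-EPDF. -/
theorem partition_of_pds_dpdf_epdf {F : Type*} [Field F] [Fintype F] [DecidableEq F]
    (q e f eps rho : ℕ) (lam mu : ℤ) (α : F)
    (hq : Fintype.card F = q) (hα : IsPrimitiveElt α)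
    (hef : q = e * f + 1) (he : 1 < e) (hf : 1 < f)
    (herho : q = eps * rho + 1) (hepse : eps ∣ e) (heps : 1 < eps) (hrho : 1 < rho)
    (hlt : eps < e)
    (hPDS : IsPDS q rho lam mu (cyclo α eps rho 0)) (hproper : lam ≠ mu) :
    ∀ D : Fin (e / eps) → Finset F, D = (fun i : Fin (e / eps) => cyclo α e f (eps * (i : ℕ))) →
    ((∃ i j, 1 ≤ i ∧ i ≤ eps - 1 ∧ 1 ≤ j ∧ j ≤ eps - 1 ∧ i ≠ j ∧
        phi α e f eps rho i ≠ phi α e f eps rho j) →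
      (¬ ∃ a b : ℤ, IsDPDF q (e / eps) f a b D) ∧
      (¬ ∃ a b : ℤ, IsEPDF q (e / eps) f a b D)) ∧
    ((∀ j, 1 ≤ j → j ≤ eps - 1 → phi α e f eps rho j = phi α e f eps rho 1) →
      (((phi α e f eps rho 1 : ℤ) - (phi α e f eps rho 0 : ℤ) = 0 →
         ∃ a : ℕ, eps * a = f - 1 ∧ IsDDF q (e / eps) f (a : ℤ) D ∧
           IsEPDF q (e / eps) f (lam - (a : ℤ)) (mu - (a : ℤ)) D) ∧
       ((phi α e f eps rho 1 : ℤ) - (phi α e f eps rho 0 : ℤ) = mu - lam →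
         ∃ b : ℕ, eps ^ 2 * b = (e - eps) * f ∧ IsEDF q (e / eps) f (b : ℤ) D ∧
           IsDPDF q (e / eps) f (lam - (b : ℤ)) (mu - (b : ℤ)) D) ∧
       ((phi α e f eps rho 1 : ℤ) - (phi α e f eps rho 0 : ℤ) ≠ 0 →
        (phi α e f eps rho 1 : ℤ) - (phi α e f eps rho 0 : ℤ) ≠ mu - lam →
         (IsDPDF q (e / eps) f (phi α e f eps rho 0 : ℤ) (phi α e f eps rho 1 : ℤ) D ∧
          (phi α e f eps rho 0 : ℤ) ≠ (phi α e f eps rho 1 : ℤ) ∧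
          IsEPDF q (e / eps) f (lam - (phi α e f eps rho 0 : ℤ))
            (mu - (phi α e f eps rho 1 : ℤ)) D ∧
          lam - (phi α e f eps rho 0 : ℤ) ≠ mu - (phi α e f eps rho 1 : ℤ))))) :=
  partition_of_pds_dpdf_epdf_general q e f eps rho lam mu α hq hα hef he hf herho hepse hPDS
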